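/- arXiv:1711.05156 — 2 statements merged into one kernel-verified Lean document; each statement's English description precedes it below -/
import Mathlib

section
/- Let k be a field, A a commutative associative unital k-algebra, and (L, a_L) any (k,A)-Lie-Rinehart algebra. Then there exist a set S, a map a_S : S → Der_k(A), and a surjective morphism of (k,A)-Lie-Rinehart algebras g : L_{A,S} → L from the free (k,A)-Lie-Rinehart algebra L_{A,S} = A ⊗_k FreeLie_k(S) (the transformation Lie-Rinehart algebra of (FreeLie_k(S), ā_S), where ā_S is the Lie algebra morphism induced by a_S) onto L. In other words, every (k,A)-Lie-Rinehart algebra is a quotient of a free (k,A)-Lie-Rinehart algebra over some set. -/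
/-!
Take `S = L` and `a_S = a_L`. The free Lie algebra on `L` maps onto `L` by the Lie morphism `φ`
extending the identity, and since `a_L` is a Lie morphism, `a_L ∘ φ` is the morphism induced by
`a_S`. The `A`-linear extension `α ⊗ ξ ↦ α • φ ξ` hits every `x` as the image of `1 ⊗ x`, is
compatible with the anchors, and the Leibniz rule (in both arguments of the bracket of `L`) makes
it carry the transformation bracket to the bracket of `L`.
-/

open TensorProduct

universe u v w

abbrev LieRing.ofBilinear {k M : Type*} [CommRing k] [AddCommGroup M] [Module k M]
    (br : M →ₗ[k] M →ₗ[k] M) (h_alt : br.IsAlt)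
    (h_jacobi : ∀ x y z, br x (br y z) + br y (br z x) + br z (br x y) = 0) : LieRing M where
  bracket x y := br x y
  add_lie x y z := by simp only [map_add, LinearMap.add_apply]
  lie_add x y z := map_add _ _ _
  lie_self := h_alt
  leibniz_lie x y z := by
    show br x (br y z) = br (br x y) z + br y (br x z)
    have := h_jacobi x y z
    rw [← h_alt.neg x z, ← h_alt.neg (br x y) z, map_neg] at this
    linear_combination (norm := abel) this

abbrev LieAlgebra.ofBilinear {k M : Type*} [CommRing k] [AddCommGroup M] [Module k M]
    (br : M →ₗ[k] M →ₗ[k] M) (h_alt : br.IsAlt)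
    (h_jacobi : ∀ x y z, br x (br y z) + br y (br z x) + br z (br x y) = 0) :
    let _ := LieRing.ofBilinear br h_alt h_jacobi
    LieAlgebra k M :=
  let _ := LieRing.ofBilinear br h_alt h_jacobi
  { lie_smul c x y := map_smul (br x) c y }

theorem FreeLieAlgebra.lift_comp {R X L M : Type*} [CommRing R] [LieRing L] [LieAlgebra R L]
    [LieRing M] [LieAlgebra R M] (F : L →ₗ⁅R⁆ M) (f : X → L) :
    lift R (F ∘ f) = F.comp (lift R f) :=
  hom_ext fun x => by simp

section Transformation

variable {k A g : Type*} [CommRing k] [CommRing A] [Algebra k A] [LieRing g] [LieAlgebra k g]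

variable (A) in
def Derivation.toEndₗ : Derivation k A A →ₗ[k] Module.End k A where
  toFun D := D
  map_add' _ _ := rfl
  map_smul' _ _ := rfl

noncomputable def transformationAnchorAction (ρ : g →ₗ[k] Derivation k A A) :
    A ⊗[k] g →ₗ[k] Module.End k (A ⊗[k] g) :=
  LinearMap.rTensorHom g ∘ₗ Derivation.toEndₗ A ∘ₗ (ρ.liftBaseChange A).restrictScalars k

/-- The bracket of the transformation Lie-Rinehart algebra `A ⊗ g` of `ρ`: the base-change
bracket corrected by the anchor `ā = ρ.liftBaseChange A` acting on coefficients,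
`⁅x, y⁆ + (ā x ⊗ id) y - (ā y ⊗ id) x`. -/
noncomputable def transformationBracket (ρ : g →ₗ[k] Derivation k A A) :
    A ⊗[k] g →ₗ[k] A ⊗[k] g →ₗ[k] A ⊗[k] g :=
  LinearMap.mk₂ k (⁅·, ·⁆) add_lie smul_lie lie_add lie_smul + transformationAnchorAction ρ
    - (transformationAnchorAction ρ).flip

theorem transformationBracket_tmul (ρ : g →ₗ[k] Derivation k A A) (α β : A) (ξ η : g) :
    transformationBracket ρ (α ⊗ₜ[k] ξ) (β ⊗ₜ[k] η)
      = (α * β) ⊗ₜ[k] ⁅ξ, η⁆ + (α * ρ ξ β) ⊗ₜ[k] η - (β * ρ η α) ⊗ₜ[k] ξ := by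
  simp [transformationBracket, transformationAnchorAction, Derivation.toEndₗ,
    LieAlgebra.ExtendScalars.bracket_tmul]

end Transformation

section Morphism

variable {k A L g : Type*} [CommRing k] [CommRing A] [Algebra k A] [LieRing L] [Module A L]
  {aL : L →ₗ[A] Derivation k A A}

theorem smul_lie_eq_of_leibniz
    (hleib : ∀ (s t : L) (f : A), ⁅s, f • t⁆ = f • ⁅s, t⁆ + aL s f • t) (s t : L) (f : A) :
    ⁅f • s, t⁆ = f • ⁅s, t⁆ - aL t f • s := by
  rw [← lie_skew, hleib, ← lie_skew s t]
  module

variable [LieRing g] [LieAlgebra k g] [LieAlgebra k L] [IsScalarTower k A L]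

theorem liftBaseChange_transformationBracket
    (hleib : ∀ (s t : L) (f : A), ⁅s, f • t⁆ = f • ⁅s, t⁆ + aL s f • t) (φ : g →ₗ⁅k⁆ L)
    (x y : A ⊗[k] g) :
    φ.toLinearMap.liftBaseChange A
        (transformationBracket ((aL.restrictScalars k).comp φ.toLinearMap) x y)
      = ⁅φ.toLinearMap.liftBaseChange A x, φ.toLinearMap.liftBaseChange A y⁆ := by
  induction x using TensorProduct.induction_on with
  | zero => simp
  | add x₁ x₂ h₁ h₂ => simp only [map_add, LinearMap.add_apply, h₁, h₂, add_lie]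
  | tmul α ξ =>
    induction y using TensorProduct.induction_on with
    | zero => simp
    | add y₁ y₂ h₁ h₂ => simp only [map_add, h₁, h₂, lie_add]
    | tmul β η =>
      simp only [transformationBracket_tmul, map_sub, map_add, LinearMap.liftBaseChange_tmul,
        LinearMap.coe_comp, LieHom.coe_toLinearMap, Function.comp_apply,
        LinearMap.coe_restrictScalars, LieHom.map_lie, smul_lie_eq_of_leibniz hleib, hleib,
        map_smul, Derivation.smul_apply, smul_eq_mul]
      module

end Morphism

/-- Every `(k,A)`-Lie-Rinehart algebra `L` is a quotient of a free `(k,A)`-Lie-Rinehart algebra: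
there exist a set `S`, a map `a_S : S → Der_k(A)`, and a surjective morphism of
`(k,A)`-Lie-Rinehart algebras `g : L_{A,S} → L`, where `L_{A,S} = A ⊗[k] FreeLie_k(S)` is the
transformation Lie-Rinehart algebra of `(FreeLie_k(S), ā_S)` (whose bracket `brF` and anchor
`anchF` are given by the transformation formulas). -/
theorem lie_rinehart_quotient_of_free
    (k : Type u) (A : Type v) (L : Type w) [Field k] [CommRing A] [Algebra k A]
    [AddCommGroup L] [Module k L] [Module A L] [IsScalarTower k A L]
    -- Lie-Rinehart structure on L
    (brL : L →ₗ[k] L →ₗ[k] L) (aL : L →ₗ[A] Derivation k A A)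
    (haltL : ∀ x : L, brL x x = 0)
    (hjacL : ∀ x y z : L, brL x (brL y z) + brL y (brL z x) + brL z (brL x y) = 0)
    (hleibL : ∀ (s t : L) (f : A), brL s (f • t) = f • brL s t + (aL s) f • t)
    (hanchL : ∀ s t : L, aL (brL s t) = ⁅aL s, aL t⁆) :
    ∃ (S : Type w) (aS : S → Derivation k A A)
      (brF : (A ⊗[k] FreeLieAlgebra k S) →ₗ[k] (A ⊗[k] FreeLieAlgebra k S) →ₗ[k]
        (A ⊗[k] FreeLieAlgebra k S))
      (anchF : (A ⊗[k] FreeLieAlgebra k S) →ₗ[A] Derivation k A A)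
      (g : (A ⊗[k] FreeLieAlgebra k S) →ₗ[A] L),
      -- brF and anchF are the transformation Lie-Rinehart bracket and anchor
      (∀ (α β : A) (ξ η : FreeLieAlgebra k S),
        brF (α ⊗ₜ[k] ξ) (β ⊗ₜ[k] η)
          = (α * β) ⊗ₜ[k] ⁅ξ, η⁆
            + (α * (FreeLieAlgebra.lift k aS ξ) β) ⊗ₜ[k] η
            - (β * (FreeLieAlgebra.lift k aS η) α) ⊗ₜ[k] ξ) ∧
      (∀ (α : A) (ξ : FreeLieAlgebra k S),
        anchF (α ⊗ₜ[k] ξ) = α • (FreeLieAlgebra.lift k aS ξ)) ∧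
      -- g is a surjective morphism of Lie-Rinehart algebras
      Function.Surjective g ∧
      (∀ x y : A ⊗[k] FreeLieAlgebra k S, g (brF x y) = brL (g x) (g y)) ∧
      (∀ x : A ⊗[k] FreeLieAlgebra k S, aL (g x) = anchF x) := by
  let _ := LieRing.ofBilinear brL haltL hjacL
  let _ := LieAlgebra.ofBilinear brL haltL hjacL
  let anchor : L →ₗ⁅k⁆ Derivation k A A := { aL.restrictScalars k with map_lie' := hanchL _ _ }
  let φ : FreeLieAlgebra k L →ₗ⁅k⁆ L := FreeLieAlgebra.lift k id
  have anchor_comp_φ : (aL.restrictScalars k).comp φ.toLinearMap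
      = (FreeLieAlgebra.lift k aL).toLinearMap :=
    congrArg LieHom.toLinearMap (FreeLieAlgebra.lift_comp anchor id).symm
  refine ⟨L, aL, transformationBracket (FreeLieAlgebra.lift k aL).toLinearMap,
    (FreeLieAlgebra.lift k aL).toLinearMap.liftBaseChange A, φ.toLinearMap.liftBaseChange A,
    transformationBracket_tmul _, fun _ _ => rfl, fun x => ⟨1 ⊗ₜ FreeLieAlgebra.of k x, ?_⟩,
    ?_, ?_⟩
  · simp [φ]
  · rw [← anchor_comp_φ]
    exact liftBaseChange_transformationBracket hleibL φ
  · rw [← anchor_comp_φ, ← LinearMap.liftBaseChange_comp]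
    exact fun _ => rfl
end

section
/- With Ũ = Ũ_{A,S} as defined in the context: (i) there is a unique k-algebra homomorphism π : Ũ → End_k(A) such that π(⟨α⟩) is multiplication by α on A and π(⟨s⟩) = a_S(s), for all α ∈ A and s ∈ S (so A becomes a left Ũ-module); (ii) defining the augmentation ε : Ũ → A by ε(u) = π(u)(1_A), the kernel of ε equals the left ideal K of Ũ generated by the set {⟨s⟩ : s ∈ S}; consequently ε induces an isomorphism of left Ũ-modules Ũ/K ≅ A, i.e. there is a short exact sequence of left Ũ-modules 0 → K → Ũ → A → 0. -/
/-- The relations defining `Ũ_{A,S}` inside the free associative algebra on `A ⊔ S`. -/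
inductive UtildeRel (k A S : Type*) [CommRing k] [CommRing A] [Algebra k A]
    (aS : S → Derivation k A A) :
    FreeAlgebra k (A ⊕ S) → FreeAlgebra k (A ⊕ S) → Prop
  | add (α β : A) : UtildeRel k A S aS
      (FreeAlgebra.ι k (Sum.inl α) + FreeAlgebra.ι k (Sum.inl β))
      (FreeAlgebra.ι k (Sum.inl (α + β)))
  | mul (α β : A) : UtildeRel k A S aS
      (FreeAlgebra.ι k (Sum.inl α) * FreeAlgebra.ι k (Sum.inl β))
      (FreeAlgebra.ι k (Sum.inl (α * β)))
  | der (s : S) (α : A) : UtildeRel k A S aS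
      (FreeAlgebra.ι k (Sum.inr s) * FreeAlgebra.ι k (Sum.inl α))
      (FreeAlgebra.ι k (Sum.inl α) * FreeAlgebra.ι k (Sum.inr s)
        + FreeAlgebra.ι k (Sum.inl (aS s α)))
  | scalar (c : k) : UtildeRel k A S aS
      (algebraMap k (FreeAlgebra k (A ⊕ S)) c)
      (FreeAlgebra.ι k (Sum.inl (algebraMap k A c)))

/-- `Ũ = Ũ_{A,S}`, the quotient of the free associative `k`-algebra on `A ⊔ S` by the
two-sided ideal generated by the relations `UtildeRel`. -/
abbrev Utilde (k A S : Type*) [CommRing k] [CommRing A] [Algebra k A]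
    (aS : S → Derivation k A A) : Type _ :=
  RingQuot (UtildeRel k A S aS)

/-- The class `⟨α⟩ ∈ Ũ` of a generator coming from `α ∈ A`. -/
noncomputable def UtildeA (k A S : Type*) [CommRing k] [CommRing A] [Algebra k A]
    (aS : S → Derivation k A A) : A → Utilde k A S aS :=
  fun α => RingQuot.mkAlgHom k (UtildeRel k A S aS) (FreeAlgebra.ι k (Sum.inl α))

/-- The class `⟨s⟩ ∈ Ũ` of a generator coming from `s ∈ S`. -/
noncomputable def UtildeS (k A S : Type*) [CommRing k] [CommRing A] [Algebra k A]
    (aS : S → Derivation k A A) : S → Utilde k A S aS :=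
  fun s => RingQuot.mkAlgHom k (UtildeRel k A S aS) (FreeAlgebra.ι k (Sum.inr s))

/-!
The map `π` is forced on generators, and the relations of `Ũ` are exactly what is needed for
multiplication operators and the derivations `a_S(s)` to define it. Since every `a_S(s)` kills
`1`, the left ideal `K` lies in the kernel of `ε`. Conversely, moving each `⟨s⟩` to the right
with `⟨s⟩⟨α⟩ = ⟨α⟩⟨s⟩ + ⟨a_S(s)(α)⟩` shows by induction on `u` that
`u⟨α⟩ ≡ ⟨π(u)(α)⟩ (mod K)`; for `α = 1` this reads `u ≡ ⟨ε(u)⟩ (mod K)`, so `ε(u) = 0`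
forces `u ∈ K`.
-/

namespace Utilde

variable {k A S : Type*} [CommRing k] [CommRing A] [Algebra k A] (aS : S → Derivation k A A)

theorem utildeA_add (α β : A) :
    UtildeA k A S aS (α + β) = UtildeA k A S aS α + UtildeA k A S aS β := by
  simpa [UtildeA] using (RingQuot.mkAlgHom_rel k (UtildeRel.add (aS := aS) α β)).symm

theorem utildeA_mul (α β : A) :
    UtildeA k A S aS (α * β) = UtildeA k A S aS α * UtildeA k A S aS β := by
  simpa [UtildeA] using (RingQuot.mkAlgHom_rel k (UtildeRel.mul (aS := aS) α β)).symm

theorem utildeS_mul_utildeA (s : S) (α : A) :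
    UtildeS k A S aS s * UtildeA k A S aS α =
      UtildeA k A S aS α * UtildeS k A S aS s + UtildeA k A S aS (aS s α) := by
  simpa [UtildeA, UtildeS] using RingQuot.mkAlgHom_rel k (UtildeRel.der (aS := aS) s α)

theorem algebraMap_eq_utildeA (c : k) :
    algebraMap k (Utilde k A S aS) c = UtildeA k A S aS (algebraMap k A c) := by
  simpa [UtildeA] using RingQuot.mkAlgHom_rel k (UtildeRel.scalar (aS := aS) (A := A) c)

theorem utildeA_zero : UtildeA k A S aS 0 = 0 := by
  simpa using utildeA_add aS (0 : A) 0

theorem utildeA_one : UtildeA k A S aS 1 = 1 := by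
  simpa using (algebraMap_eq_utildeA aS (1 : k)).symm

/-- Scalars need no separate case: `c · 1 = ⟨c · 1_A⟩` in `Ũ`. -/
@[elab_as_elim]
theorem induction_on {motive : Utilde k A S aS → Prop} (u : Utilde k A S aS)
    (utildeA : ∀ α, motive (UtildeA k A S aS α))
    (utildeS : ∀ s, motive (UtildeS k A S aS s))
    (mul : ∀ u v, motive u → motive v → motive (u * v))
    (add : ∀ u v, motive u → motive v → motive (u + v)) : motive u := by
  obtain ⟨x, rfl⟩ := RingQuot.mkAlgHom_surjective k (UtildeRel k A S aS) u
  induction x using FreeAlgebra.induction with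
  | grade0 c => rw [AlgHom.commutes, algebraMap_eq_utildeA]; exact utildeA _
  | grade1 x => cases x with
    | inl α => exact utildeA α
    | inr s => exact utildeS s
  | mul x y hx hy => rw [map_mul]; exact mul _ _ hx hy
  | add x y hx hy => rw [map_add]; exact add _ _ hx hy

theorem algHom_ext {B : Type*} [Semiring B] [Algebra k B] {f g : Utilde k A S aS →ₐ[k] B}
    (hA : ∀ α, f (UtildeA k A S aS α) = g (UtildeA k A S aS α))
    (hS : ∀ s, f (UtildeS k A S aS s) = g (UtildeS k A S aS s)) : f = g :=
  RingQuot.ringQuot_ext' _ _ _ <| FreeAlgebra.hom_ext <| funext fun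
    | .inl α => hA α
    | .inr s => hS s

/-- The representation `π` of `Ũ` on `A`. -/
noncomputable def toEnd : Utilde k A S aS →ₐ[k] Module.End k A :=
  RingQuot.liftAlgHom k
    ⟨FreeAlgebra.lift k (Sum.elim (Algebra.lmul k A) fun s => (aS s).toLinearMap), by
      intro x y h
      induction h with
      | add α β => simp
      | mul α β => simp only [map_mul, FreeAlgebra.lift_ι_apply, Sum.elim_inl]
      | der s α => ext; simp [Derivation.leibniz, mul_comm]
      | scalar c => simp only [AlgHom.commutes, FreeAlgebra.lift_ι_apply, Sum.elim_inl]⟩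

@[simp]
theorem toEnd_utildeA (α : A) : toEnd aS (UtildeA k A S aS α) = Algebra.lmul k A α := by
  simp [toEnd, UtildeA]

@[simp]
theorem toEnd_utildeS (s : S) : toEnd aS (UtildeS k A S aS s) = (aS s).toLinearMap := by
  simp [toEnd, UtildeS]

theorem eq_toEnd {π : Utilde k A S aS →ₐ[k] Module.End k A}
    (hA : ∀ α, π (UtildeA k A S aS α) = Algebra.lmul k A α)
    (hS : ∀ s, π (UtildeS k A S aS s) = (aS s).toLinearMap) : π = toEnd aS :=
  algHom_ext aS (by simp [hA]) (by simp [hS])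

/-- The left ideal `K` generated by the `⟨s⟩`. -/
noncomputable def idealS : Submodule (Utilde k A S aS) (Utilde k A S aS) :=
  Submodule.span (Utilde k A S aS) (Set.range (UtildeS k A S aS))

theorem toEnd_apply_one_of_mem_idealS {u : Utilde k A S aS} (hu : u ∈ idealS aS) :
    toEnd aS u 1 = 0 := by
  induction hu using Submodule.span_induction with
  | mem x hx => obtain ⟨s, rfl⟩ := hx; simp
  | zero => simp
  | add x y _ _ hx hy => simp [hx, hy]
  | smul v x _ hx => simp [smul_eq_mul, hx]

theorem mul_utildeA_sub_mem_idealS (u : Utilde k A S aS) (α : A) :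
    u * UtildeA k A S aS α - UtildeA k A S aS (toEnd aS u α) ∈ idealS aS := by
  induction u using induction_on aS generalizing α with
  | utildeA β => simp [← utildeA_mul]
  | utildeS s =>
    rw [utildeS_mul_utildeA, toEnd_utildeS, Derivation.coeFn_coe, add_sub_cancel_right]
    exact (idealS aS).smul_mem _ (Submodule.subset_span ⟨s, rfl⟩)
  | mul u v hu hv =>
    have split : u * v * UtildeA k A S aS α - UtildeA k A S aS (toEnd aS u (toEnd aS v α)) =
        u * (v * UtildeA k A S aS α - UtildeA k A S aS (toEnd aS v α)) +
          (u * UtildeA k A S aS (toEnd aS v α) -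
            UtildeA k A S aS (toEnd aS u (toEnd aS v α))) := by
      rw [mul_sub, ← mul_assoc, sub_add_sub_cancel]
    rw [map_mul, Module.End.mul_apply, split]
    exact add_mem ((idealS aS).smul_mem u (hv α)) (hu _)
  | add u v hu hv =>
    have split : (u + v) * UtildeA k A S aS α - UtildeA k A S aS (toEnd aS u α + toEnd aS v α) =
        (u * UtildeA k A S aS α - UtildeA k A S aS (toEnd aS u α)) +
          (v * UtildeA k A S aS α - UtildeA k A S aS (toEnd aS v α)) := by
      rw [utildeA_add, add_mul]; abel
    rw [map_add, LinearMap.add_apply, split]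
    exact add_mem (hu α) (hv α)

theorem sub_utildeA_toEnd_one_mem_idealS (u : Utilde k A S aS) :
    u - UtildeA k A S aS (toEnd aS u 1) ∈ idealS aS := by
  simpa [utildeA_one] using mul_utildeA_sub_mem_idealS aS u 1

theorem toEnd_apply_one_eq_zero_iff (u : Utilde k A S aS) :
    toEnd aS u 1 = 0 ↔ u ∈ idealS aS := by
  refine ⟨fun h => ?_, toEnd_apply_one_of_mem_idealS aS⟩
  simpa [h, utildeA_zero] using sub_utildeA_toEnd_one_mem_idealS aS u

theorem toEnd_apply_one_surjective :
    Function.Surjective fun u : Utilde k A S aS => toEnd aS u 1 :=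
  fun α => ⟨UtildeA k A S aS α, by simp⟩

end Utilde

/-- (i) There is a unique `k`-algebra homomorphism `π : Ũ → End_k(A)` with `π(⟨α⟩)` equal to
multiplication by `α` and `π(⟨s⟩) = a_S(s)` (so `A` becomes a left `Ũ`-module);
(ii) defining the augmentation `ε : Ũ → A` by `ε(u) = π(u)(1)`, the kernel of `ε` equals the
left ideal `K` of `Ũ` generated by `{⟨s⟩ : s ∈ S}`, and `ε` is surjective; consequently `ε`
induces an isomorphism of left `Ũ`-modules `Ũ/K ≅ A`, i.e. there is a short exact sequence of
left `Ũ`-modules `0 → K → Ũ → A → 0`. -/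
theorem utilde_augmentation
    (k A S : Type*) [Field k] [CommRing A] [Algebra k A]
    (aS : S → Derivation k A A) :
    -- (i) existence and uniqueness of π
    (∃! π : Utilde k A S aS →ₐ[k] Module.End k A,
      (∀ α : A, π (UtildeA k A S aS α) = Algebra.lmul k A α) ∧
      (∀ s : S, π (UtildeS k A S aS s) = (aS s).toLinearMap)) ∧
    -- (ii) for any such π, the kernel of ε = π(·)(1) is the left ideal generated by the ⟨s⟩,
    -- and ε is surjective
    (∀ π : Utilde k A S aS →ₐ[k] Module.End k A,
      ((∀ α : A, π (UtildeA k A S aS α) = Algebra.lmul k A α) ∧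
       (∀ s : S, π (UtildeS k A S aS s) = (aS s).toLinearMap)) →
      (∀ u : Utilde k A S aS,
        π u (1 : A) = 0 ↔
          u ∈ Submodule.span (Utilde k A S aS) (Set.range (UtildeS k A S aS))) ∧
      Function.Surjective (fun u : Utilde k A S aS => π u (1 : A))) := by
  refine ⟨⟨Utilde.toEnd aS, ⟨Utilde.toEnd_utildeA aS, Utilde.toEnd_utildeS aS⟩,
    fun π h => Utilde.eq_toEnd aS h.1 h.2⟩, ?_⟩
  rintro π ⟨hA, hS⟩
  obtain rfl := Utilde.eq_toEnd aS hA hS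
  exact ⟨Utilde.toEnd_apply_one_eq_zero_iff aS, Utilde.toEnd_apply_one_surjective aS⟩
end
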